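/- In the root system F_4 with long roots Δ_long = {±e_i ± e_j : 1 ≤ i < j ≤ 4} and short roots Δ_sh = Δ_sh1 ∪ Δ_sh2 ∪ Δ_sh3 where Δ_sh1 = {±e_i : 1 ≤ i ≤ 4}, Δ_sh2 = {(1/2)Σε_i e_i : ε_i = ±1, ε_1ε_2ε_3ε_4 = 1}, Δ_sh3 = {(1/2)Σε_i e_i : ε_i = ±1, ε_1ε_2ε_3ε_4 = −1}, a pair (α, β) of roots satisfies that both α + β and α − β are roots if and only if α and β lie in the same Δ_shi for some i ∈ {1,2,3} and α ≠ ±β. -/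

import Mathlib

open scoped RealInnerProductSpace

/-- The standard basis vector `e_i` of `ℝ⁴`. -/
noncomputable def e (i : Fin 4) : EuclideanSpace ℝ (Fin 4) :=
  EuclideanSpace.single i 1

/-- The set `{±e_i ± e_j}` for fixed `i, j`. -/
def pmSet (i j : Fin 4) : Set (EuclideanSpace ℝ (Fin 4)) :=
  {v | ∃ ε δ : ℝ, (ε = 1 ∨ ε = -1) ∧ (δ = 1 ∨ δ = -1) ∧ v = ε • e i + δ • e j}

/-- Long roots of `F₄`: `±e_i ± e_j`, `i < j`. -/
def LongF4 : Set (EuclideanSpace ℝ (Fin 4)) :=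
  {v | ∃ i j : Fin 4, i < j ∧ v ∈ pmSet i j}

/-- Short roots of type 1: `±e_i`. -/
def Sh1 : Set (EuclideanSpace ℝ (Fin 4)) :=
  {v | ∃ i : Fin 4, v = e i ∨ v = -e i}

/-- Short roots of type 2: `(1/2)Σ ε_i e_i` with `ε₁ε₂ε₃ε₄ = 1`. -/
def Sh2 : Set (EuclideanSpace ℝ (Fin 4)) :=
  {v | ∃ ε : Fin 4 → ℝ, (∀ i, ε i = 1 ∨ ε i = -1) ∧ ε 0 * ε 1 * ε 2 * ε 3 = 1 ∧
    v = (1 / 2 : ℝ) • ∑ i, ε i • e i}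

/-- Short roots of type 3: `(1/2)Σ ε_i e_i` with `ε₁ε₂ε₃ε₄ = −1`. -/
def Sh3 : Set (EuclideanSpace ℝ (Fin 4)) :=
  {v | ∃ ε : Fin 4 → ℝ, (∀ i, ε i = 1 ∨ ε i = -1) ∧ ε 0 * ε 1 * ε 2 * ε 3 = -1 ∧
    v = (1 / 2 : ℝ) • ∑ i, ε i • e i}

/-- The root system `F₄`. -/
def ΔF4 : Set (EuclideanSpace ℝ (Fin 4)) := LongF4 ∪ Sh1 ∪ Sh2 ∪ Sh3

/-!
Every root has squared length 1 (short) or 2 (long). If `α + β` and `α - β` are roots, the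
parallelogram law `‖α + β‖² + ‖α - β‖² = 2‖α‖² + 2‖β‖²` forces `α`, `β` to be short and
orthogonal. Short roots of different classes are never orthogonal: `⟪±eᵢ, ½ Σ εⱼ eⱼ⟫ = ±½`, and
`⟪½ Σ εᵢ eᵢ, ½ Σ ε'ᵢ eᵢ⟫ = ¼ Σ εᵢ ε'ᵢ` vanishes only when the sign vectors differ in exactly two
places, which preserves `∏ εᵢ`. Conversely, two orthogonal short roots of one class have
`α ± β` of squared length 2 with integer coordinates, and such a vector is a long root.
-/

noncomputable def halfSum (ε : Fin 4 → ℝ) : EuclideanSpace ℝ (Fin 4) :=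
  (1 / 2 : ℝ) • ∑ i, ε i • e i

def IsSignVector (ε : Fin 4 → ℝ) : Prop := ∀ i, ε i = 1 ∨ ε i = -1

def ShortF4 : Set (EuclideanSpace ℝ (Fin 4)) := Sh1 ∪ Sh2 ∪ Sh3

def SameShortClass (α β : EuclideanSpace ℝ (Fin 4)) : Prop :=
  (α ∈ Sh1 ∧ β ∈ Sh1) ∨ (α ∈ Sh2 ∧ β ∈ Sh2) ∨ (α ∈ Sh3 ∧ β ∈ Sh3)

def HasIntCoords (v : EuclideanSpace ℝ (Fin 4)) : Prop := ∀ k, ∃ n : ℤ, v k = n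

section

variable {α β v : EuclideanSpace ℝ (Fin 4)} {ε ε' δ : Fin 4 → ℝ}

lemma IsSignVector.mul (hε : IsSignVector ε) (hε' : IsSignVector ε') :
    IsSignVector (ε * ε') := fun i => by
  rcases hε i with h | h <;> rcases hε' i with h' | h' <;> simp [h, h']

lemma IsSignVector.sum_eq_zero_iff (hδ : IsSignVector δ) :
    ∑ i, δ i = 0 ↔ ∏ i, δ i = 1 ∧ ¬∀ i, δ i = δ 0 := by
  rw [Fin.sum_univ_four, Fin.prod_univ_four]
  rcases hδ 0 with h0 | h0 <;> rcases hδ 1 with h1 | h1 <;> rcases hδ 2 with h2 | h2 <;>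
    rcases hδ 3 with h3 | h3 <;> simp [Fin.forall_fin_succ, h0, h1, h2, h3] <;> norm_num

lemma e_apply (i k : Fin 4) : e i k = if k = i then 1 else 0 := by
  simp [e, PiLp.single_apply]

lemma inner_e_left (i : Fin 4) (v : EuclideanSpace ℝ (Fin 4)) : ⟪e i, v⟫ = v i := by
  simp [e, EuclideanSpace.inner_single_left]

lemma halfSum_apply (ε : Fin 4 → ℝ) (k : Fin 4) : halfSum ε k = ε k / 2 := by
  simp [halfSum, e_apply]; ring

lemma neg_halfSum (ε : Fin 4 → ℝ) : -halfSum ε = halfSum (-ε) := by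
  ext k; simp [halfSum_apply, neg_div]

lemma halfSum_eq_smul (hε : IsSignVector ε) {c : ℝ} (h : ∀ i, ε i * ε' i = c) :
    halfSum ε' = c • halfSum ε := by
  ext k
  rw [PiLp.smul_apply, halfSum_apply, halfSum_apply, smul_eq_mul, ← h k]
  rcases hε k with h | h <;> rw [h] <;> ring

lemma inner_halfSum (ε ε' : Fin 4 → ℝ) :
    ⟪halfSum ε, halfSum ε'⟫ = (∑ i, ε i * ε' i) / 4 := by
  simp only [PiLp.inner_apply, halfSum_apply, RCLike.inner_apply, conj_trivial, Finset.sum_div]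
  congr 1; ext i; ring

lemma norm_sq_halfSum (hε : IsSignVector ε) : ‖halfSum ε‖ ^ 2 = 1 := by
  rw [← real_inner_self_eq_norm_sq, inner_halfSum, Fin.sum_univ_four]
  rcases hε 0 with h0 | h0 <;> rcases hε 1 with h1 | h1 <;> rcases hε 2 with h2 | h2 <;>
    rcases hε 3 with h3 | h3 <;> norm_num [h0, h1, h2, h3]

lemma norm_sq_of_mem_Sh1 (hv : v ∈ Sh1) : ‖v‖ ^ 2 = 1 := by
  obtain ⟨i, rfl | rfl⟩ := hv <;> simp [e]

lemma norm_sq_of_mem_LongF4 (hv : v ∈ LongF4) : ‖v‖ ^ 2 = 2 := by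
  obtain ⟨i, j, hij, ε, δ, hε, hδ, rfl⟩ := hv
  rw [← real_inner_self_eq_norm_sq]
  simp only [inner_add_left, inner_add_right, real_inner_smul_left, real_inner_smul_right,
    inner_e_left, e_apply, hij.ne, hij.ne', if_true, if_false]
  rcases hε with rfl | rfl <;> rcases hδ with rfl | rfl <;> norm_num

lemma norm_sq_of_mem_ShortF4 (hv : v ∈ ShortF4) : ‖v‖ ^ 2 = 1 := by
  rcases hv with (hv | ⟨ε, hε, -, rfl⟩) | ⟨ε, hε, -, rfl⟩
  · exact norm_sq_of_mem_Sh1 hv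
  all_goals exact norm_sq_halfSum hε

lemma mem_ΔF4_iff : v ∈ ΔF4 ↔ v ∈ LongF4 ∨ v ∈ ShortF4 := by
  simp only [ΔF4, ShortF4, Set.mem_union, or_assoc]

lemma mem_ShortF4_of_norm_sq_eq_one (hv : v ∈ ΔF4) (h : ‖v‖ ^ 2 = 1) : v ∈ ShortF4 := by
  refine (mem_ΔF4_iff.1 hv).resolve_left fun hl => ?_
  linarith [norm_sq_of_mem_LongF4 hl]

lemma norm_sq_mem_Icc (hv : v ∈ ΔF4) : ‖v‖ ^ 2 ∈ Set.Icc 1 2 := by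
  rcases mem_ΔF4_iff.1 hv with hv | hv
  · simp [norm_sq_of_mem_LongF4 hv]
  · simp [norm_sq_of_mem_ShortF4 hv]

lemma norm_sq_eq_one_and_inner_eq_zero (hα : α ∈ ΔF4) (hβ : β ∈ ΔF4) (hadd : α + β ∈ ΔF4)
    (hsub : α - β ∈ ΔF4) : ‖α‖ ^ 2 = 1 ∧ ‖β‖ ^ 2 = 1 ∧ ⟪α, β⟫ = 0 := by
  obtain ⟨hα₁, -⟩ := norm_sq_mem_Icc hα
  obtain ⟨hβ₁, -⟩ := norm_sq_mem_Icc hβ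
  obtain ⟨-, hadd₂⟩ := norm_sq_mem_Icc hadd
  obtain ⟨-, hsub₂⟩ := norm_sq_mem_Icc hsub
  rw [norm_add_sq_real] at hadd₂
  rw [norm_sub_sq_real] at hsub₂
  exact ⟨by linarith, by linarith, by linarith⟩

lemma inner_halfSum_ne_zero (hε : IsSignVector ε) (hε' : IsSignVector ε')
    (h : (∏ i, ε i) * ∏ i, ε' i = -1) : ⟪halfSum ε, halfSum ε'⟫ ≠ 0 := by
  have hsum : ∑ i, (ε * ε') i ≠ 0 := by
    rw [ne_eq, (hε.mul hε').sum_eq_zero_iff, Finset.prod_congr rfl fun i _ => Pi.mul_apply ε ε' i,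
      Finset.prod_mul_distrib, h]
    norm_num
  simpa [inner_halfSum] using hsum

lemma inner_halfSum_eq_zero (hε : IsSignVector ε) (hε' : IsSignVector ε')
    (h : (∏ i, ε i) * ∏ i, ε' i = 1) (h₁ : halfSum ε ≠ halfSum ε')
    (h₂ : halfSum ε ≠ -halfSum ε') : ⟪halfSum ε, halfSum ε'⟫ = 0 := by
  have hsum : ∑ i, (ε * ε') i = 0 := by
    rw [(hε.mul hε').sum_eq_zero_iff]
    refine ⟨by simpa [Finset.prod_mul_distrib] using h, fun hc => ?_⟩
    rw [halfSum_eq_smul hε hc] at h₁ h₂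
    rcases hε.mul hε' 0 with h0 | h0 <;> simp_all
  simpa [inner_halfSum] using hsum

lemma inner_ne_zero_of_mem_Sh1 (hα : α ∈ Sh1) (hε : IsSignVector ε) :
    ⟪α, halfSum ε⟫ ≠ 0 := by
  obtain ⟨i, rfl | rfl⟩ := hα <;> rcases hε i with h | h <;>
    simp [inner_e_left, halfSum_apply, h]

lemma inner_eq_zero_of_mem_Sh1 (hα : α ∈ Sh1) (hβ : β ∈ Sh1) (h₁ : α ≠ β) (h₂ : α ≠ -β) :
    ⟪α, β⟫ = 0 := by
  obtain ⟨i, rfl | rfl⟩ := hα <;> obtain ⟨j, rfl | rfl⟩ := hβ <;>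
    obtain rfl | hij := eq_or_ne i j <;> simp_all [inner_e_left, e_apply]

lemma sameShortClass_of_inner_eq_zero (hα : α ∈ ShortF4) (hβ : β ∈ ShortF4)
    (h : ⟪α, β⟫ = 0) : SameShortClass α β := by
  have h' : ⟪β, α⟫ = 0 := by rwa [real_inner_comm]
  rcases hα with (hα | hα) | hα <;> rcases hβ with (hβ | hβ) | hβ
  all_goals first
    | exact Or.inl ⟨hα, hβ⟩
    | exact Or.inr (Or.inl ⟨hα, hβ⟩)
    | exact Or.inr (Or.inr ⟨hα, hβ⟩)
    | exfalso
  · obtain ⟨ε, hε, -, rfl⟩ := hβ; exact inner_ne_zero_of_mem_Sh1 hα hε h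
  · obtain ⟨ε, hε, -, rfl⟩ := hβ; exact inner_ne_zero_of_mem_Sh1 hα hε h
  · obtain ⟨ε, hε, -, rfl⟩ := hα; exact inner_ne_zero_of_mem_Sh1 hβ hε h'
  · obtain ⟨ε, hε, hp, rfl⟩ := hα; obtain ⟨ε', hε', hp', rfl⟩ := hβ
    exact inner_halfSum_ne_zero hε hε' (by simp [Fin.prod_univ_four, hp, hp']) h
  · obtain ⟨ε, hε, -, rfl⟩ := hα; exact inner_ne_zero_of_mem_Sh1 hβ hε h'
  · obtain ⟨ε, hε, hp, rfl⟩ := hα; obtain ⟨ε', hε', hp', rfl⟩ := hβ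
    exact inner_halfSum_ne_zero hε hε' (by simp [Fin.prod_univ_four, hp, hp']) h

lemma SameShortClass.mem_ShortF4 (h : SameShortClass α β) : α ∈ ShortF4 ∧ β ∈ ShortF4 := by
  rcases h with ⟨hα, hβ⟩ | ⟨hα, hβ⟩ | ⟨hα, hβ⟩ <;> simp [ShortF4, hα, hβ]

lemma SameShortClass.inner_eq_zero (h : SameShortClass α β) (h₁ : α ≠ β) (h₂ : α ≠ -β) :
    ⟪α, β⟫ = 0 := by
  rcases h with ⟨hα, hβ⟩ | ⟨⟨ε, hε, hp, rfl⟩, ⟨ε', hε', hp', rfl⟩⟩ |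
    ⟨⟨ε, hε, hp, rfl⟩, ⟨ε', hε', hp', rfl⟩⟩
  · exact inner_eq_zero_of_mem_Sh1 hα hβ h₁ h₂
  all_goals exact inner_halfSum_eq_zero hε hε' (by simp [Fin.prod_univ_four, hp, hp']) h₁ h₂

lemma neg_mem_Sh1 (hv : v ∈ Sh1) : -v ∈ Sh1 := by
  obtain ⟨i, rfl | rfl⟩ := hv
  exacts [⟨i, Or.inr rfl⟩, ⟨i, Or.inl (neg_neg _)⟩]

lemma neg_mem_Sh2 (hv : v ∈ Sh2) : -v ∈ Sh2 := by
  obtain ⟨ε, hε, hp, rfl⟩ := hv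
  exact ⟨-ε, fun i => by rcases hε i with h | h <;> simp [h], by simpa using hp, neg_halfSum ε⟩

lemma neg_mem_Sh3 (hv : v ∈ Sh3) : -v ∈ Sh3 := by
  obtain ⟨ε, hε, hp, rfl⟩ := hv
  exact ⟨-ε, fun i => by rcases hε i with h | h <;> simp [h], by simpa using hp, neg_halfSum ε⟩

lemma SameShortClass.neg_right (h : SameShortClass α β) : SameShortClass α (-β) := by
  rcases h with ⟨hα, hβ⟩ | ⟨hα, hβ⟩ | ⟨hα, hβ⟩
  exacts [Or.inl ⟨hα, neg_mem_Sh1 hβ⟩, Or.inr (Or.inl ⟨hα, neg_mem_Sh2 hβ⟩),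
    Or.inr (Or.inr ⟨hα, neg_mem_Sh3 hβ⟩)]

lemma HasIntCoords.add {w : EuclideanSpace ℝ (Fin 4)} (hv : HasIntCoords v)
    (hw : HasIntCoords w) : HasIntCoords (v + w) := fun k => by
  obtain ⟨n, hn⟩ := hv k
  obtain ⟨m, hm⟩ := hw k
  exact ⟨n + m, by simp [hn, hm]⟩

lemma hasIntCoords_of_mem_Sh1 (hv : v ∈ Sh1) : HasIntCoords v := by
  obtain ⟨i, rfl | rfl⟩ := hv <;> intro k
  · exact ⟨if k = i then 1 else 0, by simp [e_apply, apply_ite]⟩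
  · exact ⟨-if k = i then 1 else 0, by simp [e_apply, apply_ite]⟩

lemma hasIntCoords_halfSum_add (hε : IsSignVector ε) (hε' : IsSignVector ε') :
    HasIntCoords (halfSum ε + halfSum ε') := fun k => by
  rcases hε k with h | h <;> rcases hε' k with h' | h' <;>
    simp only [PiLp.add_apply, halfSum_apply, h, h']
  exacts [⟨1, by norm_num⟩, ⟨0, by norm_num⟩, ⟨0, by norm_num⟩, ⟨-1, by norm_num⟩]

lemma SameShortClass.hasIntCoords_add (h : SameShortClass α β) : HasIntCoords (α + β) := by
  rcases h with ⟨hα, hβ⟩ | ⟨⟨ε, hε, -, rfl⟩, ⟨ε', hε', -, rfl⟩⟩ |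
    ⟨⟨ε, hε, -, rfl⟩, ⟨ε', hε', -, rfl⟩⟩
  · exact (hasIntCoords_of_mem_Sh1 hα).add (hasIntCoords_of_mem_Sh1 hβ)
  all_goals exact hasIntCoords_halfSum_add hε hε'

lemma HasIntCoords.apply_eq_one_or_neg_one (hv : HasIntCoords v) (h : ‖v‖ ^ 2 ≤ 2) {k : Fin 4}
    (hk : v k ≠ 0) : v k = 1 ∨ v k = -1 := by
  obtain ⟨n, hn⟩ := hv k
  have hn2 : n ^ 2 ≤ 2 := by
    have : (n : ℝ) ^ 2 ≤ 2 := by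
      rw [← hn]
      refine le_trans ?_ (EuclideanSpace.real_norm_sq_eq v ▸ h)
      exact Finset.single_le_sum (fun i _ => sq_nonneg (v i)) (Finset.mem_univ k)
    exact_mod_cast this
  have h₁ : -1 ≤ n := by nlinarith
  have h₂ : n ≤ 1 := by nlinarith
  rw [hn] at hk ⊢
  interval_cases n <;> simp_all

lemma mem_LongF4_of_ne {i j : Fin 4} (hij : i ≠ j) {s t : ℝ} (hs : s = 1 ∨ s = -1)
    (ht : t = 1 ∨ t = -1) : s • e i + t • e j ∈ LongF4 := by
  rcases hij.lt_or_gt with h | h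
  · exact ⟨i, j, h, s, t, hs, ht, rfl⟩
  · exact ⟨j, i, h, t, s, ht, hs, add_comm _ _⟩

lemma mem_LongF4_of_hasIntCoords (hv : HasIntCoords v) (h : ‖v‖ ^ 2 = 2) : v ∈ LongF4 := by
  have hsign (k : Fin 4) (hk : v k ≠ 0) := hv.apply_eq_one_or_neg_one h.le hk
  set S := Finset.univ.filter fun k => v k ≠ 0
  have hS : S.card = 2 := by
    have hsq (k : Fin 4) : v k ^ 2 = if v k ≠ 0 then 1 else 0 := by
      by_cases hk : v k = 0
      · simp [hk]
      · rcases hsign k hk with h | h <;> simp [h]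
    have : ((S.card : ℕ) : ℝ) = 2 := by
      rw [← h, EuclideanSpace.real_norm_sq_eq, Finset.sum_congr rfl fun k _ => hsq k,
        Finset.sum_ite, Finset.sum_const_zero]
      simp [S]
    exact_mod_cast this
  obtain ⟨i, j, hij, hSij⟩ := Finset.card_eq_two.1 hS
  have hmem (k : Fin 4) : v k ≠ 0 ↔ k = i ∨ k = j := by
    simpa [S] using Finset.ext_iff.1 hSij k
  have hv : v = v i • e i + v j • e j := by
    ext k
    by_cases hk : v k = 0
    · have : k ≠ i ∧ k ≠ j := by simpa using mt (hmem k).2 (not_not.2 hk)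
      simp [e_apply, hk, this.1, this.2]
    · rcases (hmem k).1 hk with rfl | rfl <;> simp [e_apply, hij, hij.symm]
  rw [hv]
  exact mem_LongF4_of_ne hij (hsign i ((hmem i).2 (Or.inl rfl)))
    (hsign j ((hmem j).2 (Or.inr rfl)))

lemma SameShortClass.add_mem_LongF4 (h : SameShortClass α β) (h₁ : α ≠ β) (h₂ : α ≠ -β) :
    α + β ∈ LongF4 := by
  refine mem_LongF4_of_hasIntCoords h.hasIntCoords_add ?_
  rw [norm_add_sq_real, norm_sq_of_mem_ShortF4 h.mem_ShortF4.1,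
    norm_sq_of_mem_ShortF4 h.mem_ShortF4.2, h.inner_eq_zero h₁ h₂]
  norm_num

end

/-- In `F₄`, `(α, β)` is matched (both `α + β` and `α − β` are roots)
iff `α` and `β` lie in the same short class `Sh_i` and `α ≠ ±β`. -/
theorem matched_pairs_F4 (α β : EuclideanSpace ℝ (Fin 4))
    (hα : α ∈ ΔF4) (hβ : β ∈ ΔF4) :
    (α + β ∈ ΔF4 ∧ α - β ∈ ΔF4) ↔
      (((α ∈ Sh1 ∧ β ∈ Sh1) ∨ (α ∈ Sh2 ∧ β ∈ Sh2) ∨ (α ∈ Sh3 ∧ β ∈ Sh3)) ∧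
        α ≠ β ∧ α ≠ -β) := by
  constructor
  · rintro ⟨hadd, hsub⟩
    obtain ⟨hα1, hβ1, horth⟩ := norm_sq_eq_one_and_inner_eq_zero hα hβ hadd hsub
    refine ⟨sameShortClass_of_inner_eq_zero (mem_ShortF4_of_norm_sq_eq_one hα hα1)
      (mem_ShortF4_of_norm_sq_eq_one hβ hβ1) horth, ?_, ?_⟩
    · rintro rfl
      rw [real_inner_self_eq_norm_sq, hα1] at horth
      exact one_ne_zero horth
    · rintro rfl
      rw [inner_neg_left, real_inner_self_eq_norm_sq, hβ1] at horth
      norm_num at horth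
  · rintro ⟨hclass : SameShortClass α β, h₁, h₂⟩
    have hadd : α + β ∈ LongF4 := hclass.add_mem_LongF4 h₁ h₂
    have hsub : α + -β ∈ LongF4 := hclass.neg_right.add_mem_LongF4 h₂ (by rwa [neg_neg])
    rw [← sub_eq_add_neg] at hsub
    exact ⟨mem_ΔF4_iff.2 (Or.inl hadd), mem_ΔF4_iff.2 (Or.inl hsub)⟩
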